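/- arXiv:2202.07109 — 2 statements merged into one kernel-verified Lean document; each statement's English description precedes it below -/
import Mathlib

section
/- Assume (A2) and (A4). Then Γ(σ) = 𝒯(σ) for every n ≥ 1 and every σ ∈ 𝒮_n; moreover 𝒮_n = G_n ∩ Ψ^n for every n ≥ 1, and hence 𝒮* = G* ∩ (∪_{n≥1} Ψ^n). -/
open scoped Classical ENNReal
open Filter MeasureTheory

noncomputable section

namespace MTM

/-- the edge relation of the directed graph `𝒢`: `(i,j) ∈ G₂ ↔ p i j > 0`. -/
def edge (p : ℕ → ℕ → ℝ) (i j : ℕ) : Prop := 0 < p i j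

/-- product of transition weights along a word. -/
def pword (p : ℕ → ℕ → ℝ) : List ℕ → ℝ
  | [] => 1
  | [_] => 1
  | a :: b :: t => p a b * pword p (b :: t)

/-- product of contraction ratios along a word. -/
def sword (sr : ℕ → ℕ → ℝ) : List ℕ → ℝ
  | [] => 1
  | [_] => 1
  | a :: b :: t => sr a b * sword sr (b :: t)

/-- `𝒯(σ)`: all lifts of a word, each letter `i` may be replaced by `i + N`. -/
def lifts (N : ℕ) : List ℕ → Finset (List ℕ)
  | [] => {[]}
  | i :: t => (lifts N t).biUnion fun l => {i :: l, (i + N) :: l}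

/-- `Γ(σ) = G_n ∩ 𝒯(σ)`. -/
def Gam (p : ℕ → ℕ → ℝ) (N : ℕ) (σ : List ℕ) : Finset (List ℕ) :=
  (lifts N σ).filter fun τ => τ.Chain' (edge p)

/-- words over the alphabet `Ψ = {1,…,N}`. -/
def isPsiWord (N : ℕ) (σ : List ℕ) : Prop :=
  σ ≠ [] ∧ ∀ x ∈ σ, x ∈ Finset.Icc 1 N

/-- `σ ∈ 𝒮_*`: a `Ψ`-word having at least one admissible lift. -/
def isSword (p : ℕ → ℕ → ℝ) (N : ℕ) (σ : List ℕ) : Prop :=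
  isPsiWord N σ ∧ (Gam p N σ).Nonempty

/-- `σ ∈ G_*`: admissible words over `Ω = {1,…,2N}`. -/
def isGword (p : ℕ → ℕ → ℝ) (N : ℕ) (σ : List ℕ) : Prop :=
  σ ≠ [] ∧ (∀ x ∈ σ, x ∈ Finset.Icc 1 (2 * N)) ∧ σ.Chain' (edge p)

/-- `σ ∈ H₁^*`: admissible words with all letters in `Ψ`. -/
def isH1word (p : ℕ → ℕ → ℝ) (N : ℕ) (σ : List ℕ) : Prop :=
  σ ≠ [] ∧ (∀ x ∈ σ, x ∈ Finset.Icc 1 N) ∧ σ.Chain' (edge p)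

/-- `σ ∈ H₂^*`: admissible words with all letters in `Υ = {N+1,…,2N}`. -/
def isH2word (p : ℕ → ℕ → ℝ) (N : ℕ) (σ : List ℕ) : Prop :=
  σ ≠ [] ∧ (∀ x ∈ σ, x ∈ Finset.Icc (N + 1) (2 * N)) ∧ σ.Chain' (edge p)

/-- `μ(J_σ) = Σ_{σ̃ ∈ Γ(σ)} χ_{σ̃₁} p_{σ̃}`. -/
def muJ (p : ℕ → ℕ → ℝ) (χ : ℕ → ℝ) (N : ℕ) (σ : List ℕ) : ℝ :=
  ∑ τ ∈ Gam p N σ, χ (τ.headD 0) * pword p τ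

/-- `ℰ_r(σ) = μ(J_σ) s_σ^r`, with `ℰ_r(θ) = 1` for the empty word. -/
def Er (p : ℕ → ℕ → ℝ) (χ : ℕ → ℝ) (sr : ℕ → ℕ → ℝ) (N : ℕ) (r : ℝ) (σ : List ℕ) : ℝ :=
  if σ = [] then 1 else muJ p χ N σ * sword sr σ ^ r

/-- `I_{1,σ}` resp. `I_{2,σ}`: the part of `μ(J_σ)` coming from lifts ending with `i`
(resp. with `i⁺`, when applied with `i + N`). -/
def Ipart (p : ℕ → ℕ → ℝ) (χ : ℕ → ℝ) (N : ℕ) (i : ℕ) (σ : List ℕ) : ℝ :=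
  ∑ τ ∈ (Gam p N σ).filter (fun τ => τ.getLastD 0 = i), χ (τ.headD 0) * pword p τ

/-- all words of a given length over a finite alphabet. -/
def wordsOfLen (S : Finset ℕ) : ℕ → Finset (List ℕ)
  | 0 => {[]}
  | n + 1 => (wordsOfLen S n).biUnion fun l => S.image fun a => a :: l

/-- `𝒮_n` as a finite set of words. -/
def Sn (p : ℕ → ℕ → ℝ) (N n : ℕ) : Finset (List ℕ) :=
  (wordsOfLen (Finset.Icc 1 N) n).filter (isSword p N)

/-- irreducibility of the sub-matrix of `p` indexed by `S`: the corresponding directed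
graph is strongly connected. -/
def irreducibleOn (p : ℕ → ℕ → ℝ) (S : Finset ℕ) : Prop :=
  ∀ i ∈ S, ∀ j ∈ S, ∃ c : List ℕ, (∀ x ∈ c, x ∈ S) ∧ List.Chain (edge p) i (c ++ [j])

/-- Assumption (A1): `P₁, P₂` irreducible and `P₄ = 0`. -/
def A1 (p : ℕ → ℕ → ℝ) (N : ℕ) : Prop :=
  irreducibleOn p (Finset.Icc 1 N) ∧
    irreducibleOn (fun a b => p (a + N) (b + N)) (Finset.Icc 1 N) ∧
    ∀ i ∈ Finset.Icc 1 N, ∀ j ∈ Finset.Icc 1 N, p (i + N) j = 0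

/-- Assumption (A2). -/
def A2 (p : ℕ → ℕ → ℝ) (N : ℕ) : Prop :=
  ∀ i ∈ Finset.Icc 1 N,
    2 ≤ ((Finset.Icc 1 N).filter fun j => 0 < p i j).card ∧
      2 ≤ ((Finset.Icc 1 N).filter fun j => 0 < p (i + N) (j + N)).card

/-- Assumption (A3): `ℳ_{i,j} = ∅` or `ℳ_{i,j} = {(i,j),(i,j⁺),(i⁺,j⁺)}`. -/
def A3 (p : ℕ → ℕ → ℝ) (N : ℕ) : Prop :=
  ∀ i ∈ Finset.Icc 1 N, ∀ j ∈ Finset.Icc 1 N,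
    (p i j = 0 ∧ p i (j + N) = 0 ∧ p (i + N) j = 0 ∧ p (i + N) (j + N) = 0) ∨
      (0 < p i j ∧ 0 < p i (j + N) ∧ p (i + N) j = 0 ∧ 0 < p (i + N) (j + N))

/-- Assumption (A4): `ℳ_{i,j} = ∅` or `ℳ_{i,j} = 𝒩_{i,j}`. -/
def A4 (p : ℕ → ℕ → ℝ) (N : ℕ) : Prop :=
  ∀ i ∈ Finset.Icc 1 N, ∀ j ∈ Finset.Icc 1 N,
    (p i j = 0 ∧ p i (j + N) = 0 ∧ p (i + N) j = 0 ∧ p (i + N) (j + N) = 0) ∨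
      (0 < p i j ∧ 0 < p i (j + N) ∧ 0 < p (i + N) j ∧ 0 < p (i + N) (j + N))

/-- Assumption (A5): `P₁` is irreducible. -/
def A5 (p : ℕ → ℕ → ℝ) (N : ℕ) : Prop := irreducibleOn p (Finset.Icc 1 N)

/-- `T_σ = T_{σ₁σ₂} ∘ ⋯ ∘ T_{σ_{n-1}σ_n}` (identity for words of length `≤ 1`). -/
def Tword {E : Type*} (T : ℕ → ℕ → E → E) : List ℕ → E → E
  | [], x => x
  | [_], x => x
  | a :: b :: t, x => T a b (Tword T (b :: t) x)

/-- the cylinder set `J_σ = T_σ (J_{σ_n})`. -/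
def Jword {E : Type*} (T : ℕ → ℕ → E → E) (J : ℕ → Set E) (σ : List ℕ) : Set E :=
  Tword T σ '' J (σ.getLastD 0)

/-- the Mauldin–Williams fractal `K = ⋂_k ⋃_{σ ∈ G_k} J_σ`. -/
def attractor {E : Type*} (p : ℕ → ℕ → ℝ) (N : ℕ) (T : ℕ → ℕ → E → E) (J : ℕ → Set E) :
    Set E :=
  ⋂ n : ℕ, ⋃ σ ∈ {σ : List ℕ | isGword p N σ ∧ σ.length = n + 1}, Jword T J σ

/-- `μ` is reducible: `μ = ν₁ ∘ π₁⁻¹` for the Markov-type measure `ν₁` associated with some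
`N × N` row-stochastic matrix and positive probability vector; equivalently, the cylinder
values of `μ` are of Markov type. -/
def reducible {E : Type*} [MeasurableSpace E] (p : ℕ → ℕ → ℝ) (N : ℕ)
    (T : ℕ → ℕ → E → E) (J : ℕ → Set E) (μ : Measure E) : Prop :=
  ∃ (pt : ℕ → ℕ → ℝ) (χt : ℕ → ℝ),
    (∀ i ∈ Finset.Icc 1 N, ∀ j ∈ Finset.Icc 1 N, 0 ≤ pt i j) ∧
      (∀ i ∈ Finset.Icc 1 N, ∑ j ∈ Finset.Icc 1 N, pt i j = 1) ∧
      (∀ i ∈ Finset.Icc 1 N, 0 < χt i) ∧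
      (∑ i ∈ Finset.Icc 1 N, χt i = 1) ∧
      ∀ σ : List ℕ, isSword p N σ →
        μ (Jword T J σ) = ENNReal.ofReal (χt (σ.headD 0) * pword pt σ)

/-- `e^r_{k,r}(μ)`: the `k`-th quantization error of order `r`, to the `r`-th power. -/
def quantErr {E : Type*} [PseudoMetricSpace E] [MeasurableSpace E] (r : ℝ) (μ : Measure E)
    (k : ℕ) : ℝ :=
  sInf ((fun α : Set E => ∫ x, Metric.infDist x α ^ r ∂μ) ''
    {α : Set E | α.Nonempty ∧ α.Finite ∧ α.ncard ≤ k})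

/-- the upper quantization coefficient `Q̄_r^s(μ) = limsup_k k^{r/s} e^r_{k,r}(μ)`. -/
def upperQC {E : Type*} [PseudoMetricSpace E] [MeasurableSpace E] (r s : ℝ)
    (μ : Measure E) : ℝ≥0∞ :=
  limsup (fun k : ℕ => ENNReal.ofReal ((k : ℝ) ^ (r / s) * quantErr r μ k)) atTop

/-- the lower quantization coefficient `Q̲_r^s(μ)`. -/
def lowerQC {E : Type*} [PseudoMetricSpace E] [MeasurableSpace E] (r s : ℝ)
    (μ : Measure E) : ℝ≥0∞ :=
  liminf (fun k : ℕ => ENNReal.ofReal ((k : ℝ) ^ (r / s) * quantErr r μ k)) atTop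

/-- the upper quantization dimension `D̄_r(μ) = limsup_k log k / (-log e_{k,r}(μ))`. -/
def upperQD {E : Type*} [PseudoMetricSpace E] [MeasurableSpace E] (r : ℝ)
    (μ : Measure E) : ℝ :=
  limsup (fun k : ℕ => Real.log k / (-Real.log (quantErr r μ k ^ (1 / r)))) atTop

/-- the lower quantization dimension `D̲_r(μ)`. -/
def lowerQD {E : Type*} [PseudoMetricSpace E] [MeasurableSpace E] (r : ℝ)
    (μ : Measure E) : ℝ :=
  liminf (fun k : ℕ => Real.log k / (-Real.log (quantErr r μ k ^ (1 / r)))) atTop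

/-- spectral radius of a real matrix: the largest modulus of a complex eigenvalue. -/
def specRad {n : Type*} [Fintype n] [DecidableEq n] (M : Matrix n n ℝ) : ℝ :=
  sSup (norm '' spectrum ℂ (M.map (algebraMap ℝ ℂ)))

/-- `A₁(s) = ((p_{i,j} s_{i,j}^r)^s)_{i,j=1}^N`. -/
def matA1 (p sr : ℕ → ℕ → ℝ) (N : ℕ) (r s : ℝ) : Matrix (Fin N) (Fin N) ℝ :=
  Matrix.of fun i j => (p (i.1 + 1) (j.1 + 1) * sr (i.1 + 1) (j.1 + 1) ^ r) ^ s

/-- `A₂(s) = ((p_{i⁺,j⁺} s_{i⁺,j⁺}^r)^s)_{i,j=1}^N`. -/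
def matA2 (p sr : ℕ → ℕ → ℝ) (N : ℕ) (r s : ℝ) : Matrix (Fin N) (Fin N) ℝ :=
  Matrix.of fun i j => (p (i.1 + 1 + N) (j.1 + 1 + N) * sr (i.1 + 1 + N) (j.1 + 1 + N) ^ r) ^ s

/-- `A₃(s) = ((p_{i,j⁺} s_{i,j⁺}^r)^s)_{i,j=1}^N`. -/
def matA3 (p sr : ℕ → ℕ → ℝ) (N : ℕ) (r s : ℝ) : Matrix (Fin N) (Fin N) ℝ :=
  Matrix.of fun i j => (p (i.1 + 1) (j.1 + 1 + N) * sr (i.1 + 1) (j.1 + 1 + N) ^ r) ^ s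

/-- `A₄(s) = ((p_{i⁺,j} s_{i⁺,j}^r)^s)_{i,j=1}^N`. -/
def matA4 (p sr : ℕ → ℕ → ℝ) (N : ℕ) (r s : ℝ) : Matrix (Fin N) (Fin N) ℝ :=
  Matrix.of fun i j => (p (i.1 + 1 + N) (j.1 + 1) * sr (i.1 + 1 + N) (j.1 + 1) ^ r) ^ s

/-- the block matrix `A(s) = [[A₁(s), A₃(s)], [A₄(s), A₂(s)]]`. -/
def matA (p sr : ℕ → ℕ → ℝ) (N : ℕ) (r s : ℝ) :
    Matrix (Fin N ⊕ Fin N) (Fin N ⊕ Fin N) ℝ :=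
  Matrix.fromBlocks (matA1 p sr N r s) (matA3 p sr N r s) (matA4 p sr N r s) (matA2 p sr N r s)

/-- `p̲ = min_{(i,j) ∈ G₂} p_{i,j}`. -/
def pMin (p : ℕ → ℕ → ℝ) (N : ℕ) : ℝ :=
  sInf {x | ∃ i ∈ Finset.Icc 1 (2 * N), ∃ j ∈ Finset.Icc 1 (2 * N), 0 < p i j ∧ x = p i j}

/-- `p̄ = max_{(i,j) ∈ G₂} p_{i,j}`. -/
def pMax (p : ℕ → ℕ → ℝ) (N : ℕ) : ℝ :=
  sSup {x | ∃ i ∈ Finset.Icc 1 (2 * N), ∃ j ∈ Finset.Icc 1 (2 * N), 0 < p i j ∧ x = p i j}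

/-- `s̲ = min_{(i,j) ∈ 𝒮₂} s_{i,j}`. -/
def sMin (p sr : ℕ → ℕ → ℝ) (N : ℕ) : ℝ :=
  sInf {x | ∃ i ∈ Finset.Icc 1 N, ∃ j ∈ Finset.Icc 1 N, isSword p N [i, j] ∧ x = sr i j}

/-- `s̄ = max_{(i,j) ∈ 𝒮₂} s_{i,j}`. -/
def sMax (p sr : ℕ → ℕ → ℝ) (N : ℕ) : ℝ :=
  sSup {x | ∃ i ∈ Finset.Icc 1 N, ∃ j ∈ Finset.Icc 1 N, isSword p N [i, j] ∧ x = sr i j}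

/-- `χ̲ = min_{1 ≤ i ≤ 2N} χ_i`. -/
def chiMin (χ : ℕ → ℝ) (N : ℕ) : ℝ := sInf {x | ∃ i ∈ Finset.Icc 1 (2 * N), x = χ i}

/-- `χ̄ = max_{1 ≤ i ≤ 2N} χ_i`. -/
def chiMax (χ : ℕ → ℝ) (N : ℕ) : ℝ := sSup {x | ∃ i ∈ Finset.Icc 1 (2 * N), x = χ i}

/-- `t` satisfies the defining property of `t_r`:
`(1/n) log Σ_{σ ∈ 𝒮_n} ℰ_r(σ)^{t/(t+r)} → 0`. -/
def trCond (p : ℕ → ℕ → ℝ) (χ : ℕ → ℝ) (sr : ℕ → ℕ → ℝ) (N : ℕ) (r t : ℝ) : Prop :=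
  0 < t ∧
    Tendsto (fun n : ℕ => (n : ℝ)⁻¹ *
      Real.log (∑ σ ∈ Sn p N n, Er p χ sr N r σ ^ (t / (t + r)))) atTop (nhds 0)

/-- the initial word of length `n` of an infinite sequence. -/
def seqTake (x : ℕ → ℕ) (n : ℕ) : List ℕ := (List.range n).map x

/-- `Γ` is a finite maximal antichain among the words satisfying `W`, with respect to the
infinite sequences satisfying `Wseq`. -/
def isMaxAntichain (W : List ℕ → Prop) (Wseq : (ℕ → ℕ) → Prop) (Γ : Finset (List ℕ)) : Prop :=
  (∀ σ ∈ Γ, W σ) ∧ (∀ σ ∈ Γ, ∀ τ ∈ Γ, σ ≠ τ → ¬σ <+: τ) ∧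
    ∀ x : ℕ → ℕ, Wseq x → ∃ n : ℕ, 1 ≤ n ∧ seqTake x n ∈ Γ

/-- infinite admissible sequences with letters in `Ψ`. -/
def isH1seq (p : ℕ → ℕ → ℝ) (N : ℕ) (x : ℕ → ℕ) : Prop :=
  (∀ n, x n ∈ Finset.Icc 1 N) ∧ ∀ n, 0 < p (x n) (x (n + 1))

/-- infinite admissible sequences with letters in `Υ`. -/
def isH2seq (p : ℕ → ℕ → ℝ) (N : ℕ) (x : ℕ → ℕ) : Prop :=
  (∀ n, x n ∈ Finset.Icc (N + 1) (2 * N)) ∧ ∀ n, 0 < p (x n) (x (n + 1))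

/-- minimal length of a word in `Γ`. -/
def minLen (Γ : Finset (List ℕ)) : ℕ := sInf {n | ∃ σ ∈ Γ, σ.length = n}

/-- maximal length of a word in `Γ`. -/
def maxLen (Γ : Finset (List ℕ)) : ℕ := sSup {n | ∃ σ ∈ Γ, σ.length = n}

/-- `Λ_{k,r} = {σ ∈ 𝒮^* : ℰ_r(σ) < c₁^k ≤ ℰ_r(σ^♭)}`. -/
def LamSet (p : ℕ → ℕ → ℝ) (χ : ℕ → ℝ) (sr : ℕ → ℕ → ℝ) (N : ℕ) (r c1 : ℝ) (k : ℕ) :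
    Set (List ℕ) :=
  {σ | isSword p N σ ∧ Er p χ sr N r σ < c1 ^ k ∧ c1 ^ k ≤ Er p χ sr N r σ.dropLast}

/-- `ℒ(σ) = {σ, σ⁺} ∪ {σ|_h ∗ (σ_{h+1}⁺, …, σ_n⁺) : 1 ≤ h ≤ n − 1}`. -/
def Lset (N : ℕ) (σ : List ℕ) : Finset (List ℕ) :=
  (Finset.range (σ.length + 1)).image fun h =>
    σ.take h ++ (σ.drop h).map (fun x => x + N)

/-! Under (A4), whether `p a b > 0` for `a ∈ {i, i⁺}`, `b ∈ {j, j⁺}` depends only on `(i, j)`.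
Hence a lift of a `Ψ`-word `σ` is admissible exactly when `σ` is, so either no lift of `σ` is
admissible or all are; and `σ` is one of its own lifts. -/

theorem _root_.List.Forall₂.isChain_iff {α β : Type*} {L : α → β → Prop}
    {R : α → α → Prop} {S : β → β → Prop}
    (hRS : ∀ ⦃a a' b b'⦄, L a a' → L b b' → (R a b ↔ S a' b'))
    {l₁ : List α} {l₂ : List β} (h : List.Forall₂ L l₁ l₂) :
    l₁.IsChain R ↔ l₂.IsChain S := by
  induction h with
  | nil => simp
  | cons haa' h ih =>
    cases h with
    | nil => simp
    | cons hbb' _ => rw [List.isChain_cons_cons, List.isChain_cons_cons, hRS haa' hbb', ih]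

theorem mem_lifts_iff {N : ℕ} {σ τ : List ℕ} :
    τ ∈ lifts N σ ↔ List.Forall₂ (fun i a => a = i ∨ a = i + N) σ τ := by
  induction σ generalizing τ with
  | nil => simp [lifts, eq_comm]
  | cons i σ ih =>
    cases τ with
    | nil => simp [lifts]
    | cons a τ =>
      simp only [lifts, Finset.mem_biUnion, Finset.mem_insert, Finset.mem_singleton,
        List.cons.injEq, ih, List.forall₂_cons]
      grind

theorem self_mem_lifts (N : ℕ) (σ : List ℕ) : σ ∈ lifts N σ :=
  mem_lifts_iff.2 (List.forall₂_same.2 fun _ _ => Or.inl rfl)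

theorem edge_iff_of_A4 {p : ℕ → ℕ → ℝ} {N : ℕ} (hA4 : A4 p N) {i j a b : ℕ}
    (hi : i ∈ Finset.Icc 1 N) (hj : j ∈ Finset.Icc 1 N)
    (ha : a = i ∨ a = i + N) (hb : b = j ∨ b = j + N) :
    edge p a b ↔ edge p i j := by
  rcases hA4 i hi j hj with ⟨h1, h2, h3, h4⟩ | ⟨h1, h2, h3, h4⟩ <;>
    rcases ha with rfl | rfl <;> rcases hb with rfl | rfl <;>
      simp [edge, h1, h2, h3, h4]

theorem isChain_edge_iff_of_mem_lifts {p : ℕ → ℕ → ℝ} {N : ℕ} (hA4 : A4 p N)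
    {σ τ : List ℕ} (hσ : ∀ x ∈ σ, x ∈ Finset.Icc 1 N) (hτ : τ ∈ lifts N σ) :
    σ.IsChain (edge p) ↔ τ.IsChain (edge p) := by
  have hστ := (List.forall₂_and_left σ τ).2 ⟨hσ, mem_lifts_iff.1 hτ⟩
  exact hστ.isChain_iff fun _ _ _ _ ⟨hi, ha⟩ ⟨hj, hb⟩ => (edge_iff_of_A4 hA4 hi hj ha hb).symm

theorem gam_nonempty_iff {p : ℕ → ℕ → ℝ} {N : ℕ} (hA4 : A4 p N) {σ : List ℕ}
    (hσ : ∀ x ∈ σ, x ∈ Finset.Icc 1 N) :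
    (Gam p N σ).Nonempty ↔ σ.IsChain (edge p) := by
  constructor
  · rintro ⟨τ, hτ⟩
    rw [Gam, Finset.mem_filter] at hτ
    exact (isChain_edge_iff_of_mem_lifts hA4 hσ hτ.1).2 hτ.2
  · intro hchain
    exact ⟨σ, Finset.mem_filter.2 ⟨self_mem_lifts N σ, hchain⟩⟩

theorem gam_eq_lifts {p : ℕ → ℕ → ℝ} {N : ℕ} (hA4 : A4 p N) {σ : List ℕ}
    (hσ : ∀ x ∈ σ, x ∈ Finset.Icc 1 N) (hchain : σ.IsChain (edge p)) :
    Gam p N σ = lifts N σ :=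
  Finset.filter_true_of_mem fun _ hτ => (isChain_edge_iff_of_mem_lifts hA4 hσ hτ).1 hchain

theorem stmt10_general
    (N : ℕ)
    (p : ℕ → ℕ → ℝ)
    (hA4 : A4 p N) :
    (∀ σ : List ℕ, isSword p N σ → Gam p N σ = lifts N σ) ∧
      ∀ σ : List ℕ, isSword p N σ ↔
        (σ ≠ [] ∧ (∀ x ∈ σ, x ∈ Finset.Icc 1 N) ∧ σ.Chain' (edge p)) := by
  refine ⟨fun σ ⟨⟨_, hσ⟩, hΓ⟩ => gam_eq_lifts hA4 hσ ((gam_nonempty_iff hA4 hσ).1 hΓ),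
    fun σ => ⟨?_, ?_⟩⟩
  · rintro ⟨⟨hne, hσ⟩, hΓ⟩
    exact ⟨hne, hσ, (gam_nonempty_iff hA4 hσ).1 hΓ⟩
  · rintro ⟨hne, hσ, hchain⟩
    exact ⟨⟨hne, hσ⟩, (gam_nonempty_iff hA4 hσ).2 hchain⟩

/-- **Lemma 2.2.** Assume (A2) and (A4). Then `Γ(σ) = 𝒯(σ)` for every `σ ∈ 𝒮_n`, and
`𝒮_n = G_n ∩ Ψ^n` for every `n ≥ 1` (hence `𝒮^* = G^* ∩ Ψ^*`). -/
theorem stmt10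
    (N : ℕ) (hN : 2 ≤ N)
    (p : ℕ → ℕ → ℝ)
    (hp0 : ∀ i j, 0 ≤ p i j)
    (hpsupp : ∀ i j, 0 < p i j → i ∈ Finset.Icc 1 (2 * N) ∧ j ∈ Finset.Icc 1 (2 * N))
    (hpsum : ∀ i ∈ Finset.Icc 1 (2 * N), ∑ j ∈ Finset.Icc 1 (2 * N), p i j = 1)
    (hA2 : A2 p N) (hA4 : A4 p N) :
    (∀ σ : List ℕ, isSword p N σ → Gam p N σ = lifts N σ) ∧
      ∀ σ : List ℕ, isSword p N σ ↔
        (σ ≠ [] ∧ (∀ x ∈ σ, x ∈ Finset.Icc 1 N) ∧ σ.Chain' (edge p)) :=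
  stmt10_general N p hA4

end MTM

end
end

section
/- Assume that either (A1), (A2), (A3) hold, or (A2), (A4), (A5) hold. Then there exist constants c_{1,r}, c_{2,r} ∈ (0,1) such that c_{1,r}·ℰ_r(σ^♭) ≤ ℰ_r(σ) ≤ c_{2,r}·ℰ_r(σ^♭) for every σ ∈ 𝒮*. -/
open scoped Classical ENNReal
open Filter MeasureTheory

noncomputable section

namespace MTM

/-! Write `σ = t ++ [j]` and let `i` be the last letter of `t`. Every admissible lift of `σ` is a
lift `τ` of `t` followed by `j` or `j⁺`, so `μ(J_σ) = Σ_τ χ_{τ₁} p_τ (p_{τₙ,j} + p_{τₙ,j⁺})` with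
`τₙ ∈ {i, i⁺}`. Under (A3) or (A4) both `(i,j)` and `(i⁺,j⁺)` are edges, so each bracket is at least
the least positive transition probability `m`; by (A2) the row `τₙ` has a further edge outside
`{j, j⁺}`, so the bracket is at most `1 - m`. Since `s_σ = s_t s_{i,j}` with `s_{i,j}` between the
least ratio and `1`, this bounds `ℰ_r(σ) / ℰ_r(t)`. For `|σ| = 1` the ratio is `χ_j + χ_{j⁺}`, which
lies in `[m, 1 - m]` because `N ≥ 2` leaves a third state. -/

lemma add_add_le_one_of_sum_eq_one {ι : Type*} [DecidableEq ι] {s : Finset ι} {f : ι → ℝ}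
    (hf : ∀ i ∈ s, 0 ≤ f i) (hs : ∑ i ∈ s, f i = 1) {x y z : ι} (hx : x ∈ s) (hy : y ∈ s)
    (hz : z ∈ s) (hxy : x ≠ y) (hxz : x ≠ z) (hyz : y ≠ z) : f x + f y + f z ≤ 1 := by
  calc f x + f y + f z = ∑ i ∈ {x, y, z}, f i := by
        rw [Finset.sum_insert (by simp [hxy, hxz]), Finset.sum_pair hyz, add_assoc]
    _ ≤ ∑ i ∈ s, f i :=
        Finset.sum_le_sum_of_subset_of_nonneg (by simp [Finset.insert_subset_iff, *])
          fun i hi _ => hf i hi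
    _ = 1 := hs

lemma Finset.exists_mem_Ioo_forall_le {ι : Type*} (s : Finset ι) (f : ι → ℝ)
    (hf : ∀ i ∈ s, 0 < f i) : ∃ m ∈ Set.Ioo (0 : ℝ) 1, ∀ i ∈ s, m ≤ f i := by
  rcases s.eq_empty_or_nonempty with rfl | hs
  · exact ⟨1 / 2, by norm_num, by simp⟩
  obtain ⟨i₀, hi₀, hmin⟩ := s.exists_min_image f hs
  exact ⟨min (f i₀) (1 / 2), ⟨lt_min (hf i₀ hi₀) (by norm_num), by norm_num⟩,
    fun i hi => (min_le_left _ _).trans (hmin i hi)⟩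

lemma Finset.exists_mem_Ioo_forall_le₂ {ι : Type*} (s : Finset ι) (P : ι → ι → Prop)
    (f : ι → ι → ℝ) (hf : ∀ a ∈ s, ∀ b ∈ s, P a b → 0 < f a b) :
    ∃ m ∈ Set.Ioo (0 : ℝ) 1, ∀ a ∈ s, ∀ b ∈ s, P a b → m ≤ f a b := by
  obtain ⟨m, hm, hle⟩ := Finset.exists_mem_Ioo_forall_le ((s ×ˢ s).filter fun ab => P ab.1 ab.2)
    (fun ab => f ab.1 ab.2) fun ab hab => by
      simp only [Finset.mem_filter, Finset.mem_product] at hab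
      exact hf _ hab.1.1 _ hab.1.2 hab.2
  exact ⟨m, hm, fun a ha b hb hab => hle (a, b) (by simp [ha, hb, hab])⟩

section Words

variable {N : ℕ}

lemma length_of_mem_lifts : ∀ {σ τ : List ℕ}, τ ∈ lifts N σ → τ.length = σ.length
  | [], τ, h => by simp_all [lifts]
  | i :: t, τ, h => by
    simp only [lifts, Finset.mem_biUnion, Finset.mem_insert, Finset.mem_singleton] at h
    obtain ⟨l, hl, rfl | rfl⟩ := h <;> simp [length_of_mem_lifts hl]

lemma ne_nil_of_mem_lifts {σ τ : List ℕ} (hσ : σ ≠ []) (h : τ ∈ lifts N σ) : τ ≠ [] := by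
  rw [← List.length_pos_iff, length_of_mem_lifts h]
  exact List.length_pos_iff.mpr hσ

lemma mem_lifts_cons {i : ℕ} {t τ : List ℕ} :
    τ ∈ lifts N (i :: t) ↔ ∃ l ∈ lifts N t, τ = i :: l ∨ τ = (i + N) :: l := by
  simp [lifts]

lemma lifts_append_singleton (j : ℕ) : ∀ σ : List ℕ,
    lifts N (σ ++ [j]) = (lifts N σ).biUnion fun l => {l ++ [j], l ++ [j + N]}
  | [] => by simp [lifts]
  | i :: t => by
    rw [List.cons_append, lifts, lifts_append_singleton j t, lifts, Finset.biUnion_biUnion,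
      Finset.biUnion_biUnion]
    refine Finset.biUnion_congr rfl fun l _ => ?_
    ext τ
    simp only [Finset.mem_biUnion, Finset.mem_insert, Finset.mem_singleton]
    aesop

lemma headD_of_mem_lifts {σ τ : List ℕ} (hσ : σ ≠ []) (h : τ ∈ lifts N σ) :
    τ.headD 0 = σ.headD 0 ∨ τ.headD 0 = σ.headD 0 + N := by
  obtain ⟨i, t, rfl⟩ := List.exists_cons_of_ne_nil hσ
  obtain ⟨l, _, rfl | rfl⟩ := mem_lifts_cons.mp h <;> simp

lemma getLastD_of_mem_lifts {σ τ : List ℕ} (hσ : σ ≠ []) (h : τ ∈ lifts N σ) :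
    τ.getLastD 0 = σ.getLastD 0 ∨ τ.getLastD 0 = σ.getLastD 0 + N := by
  obtain ⟨t, j, rfl⟩ := σ.eq_nil_or_concat'.resolve_left hσ
  rw [lifts_append_singleton] at h
  simp only [Finset.mem_biUnion, Finset.mem_insert, Finset.mem_singleton] at h
  obtain ⟨l, _, rfl | rfl⟩ := h <;> simp

lemma sword_eq_pword (f : ℕ → ℕ → ℝ) : ∀ l : List ℕ, sword f l = pword f l
  | [] => rfl
  | [_] => rfl
  | a :: b :: t => by rw [sword, pword, sword_eq_pword f (b :: t)]

lemma pword_append_singleton (f : ℕ → ℕ → ℝ) : ∀ {l : List ℕ}, l ≠ [] → ∀ b : ℕ,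
    pword f (l ++ [b]) = pword f l * f (l.getLastD 0) b
  | [a], _, b => by simp [pword]
  | a :: c :: t, _, b => by
    rw [List.cons_append, List.cons_append, pword, ← List.cons_append,
      pword_append_singleton f (List.cons_ne_nil c t) b, pword, mul_assoc]
    simp

lemma pword_nonneg {f : ℕ → ℕ → ℝ} (hf : ∀ i j, 0 ≤ f i j) : ∀ l : List ℕ, 0 ≤ pword f l
  | [] => zero_le_one
  | [_] => zero_le_one
  | a :: b :: t => mul_nonneg (hf a b) (pword_nonneg hf (b :: t))

lemma isChain_append_singleton_iff {R : ℕ → ℕ → Prop} {l : List ℕ} (hl : l ≠ []) (b : ℕ) :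
    (l ++ [b]).IsChain R ↔ l.IsChain R ∧ R (l.getLastD 0) b := by
  obtain ⟨t, a, rfl⟩ := l.eq_nil_or_concat'.resolve_left hl
  simp only [List.isChain_append, List.isChain_singleton, List.getLast?_concat,
    List.getLastD_concat, Option.mem_def, Option.some.injEq, forall_eq', List.head?_cons]
  tauto

lemma isPsiWord.headD_mem {σ : List ℕ} (h : isPsiWord N σ) : σ.headD 0 ∈ Finset.Icc 1 N := by
  obtain ⟨a, t, rfl⟩ := List.exists_cons_of_ne_nil h.1
  exact h.2 a (by simp)

lemma isPsiWord.getLastD_mem {σ : List ℕ} (h : isPsiWord N σ) :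
    σ.getLastD 0 ∈ Finset.Icc 1 N := by
  obtain ⟨t, a, rfl⟩ := σ.eq_nil_or_concat'.resolve_left h.1
  simpa using h.2 a (by simp)

lemma mem_Icc_of_lift {i k : ℕ} (hi : i ∈ Finset.Icc 1 N) (hk : k = i ∨ k = i + N) :
    k ∈ Finset.Icc 1 (2 * N) := by
  simp only [Finset.mem_Icc] at hi ⊢
  omega

end Words

section Measure

variable {N : ℕ} {p : ℕ → ℕ → ℝ} {χ : ℕ → ℝ}

lemma muJ_singleton (hN : 0 < N) (i : ℕ) : muJ p χ N [i] = χ i + χ (i + N) := by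
  have hne : ([i] : List ℕ) ≠ [i + N] := by simp only [ne_eq, List.cons.injEq, and_true]; omega
  have hchain : ∀ τ ∈ ({[i], [i + N]} : Finset (List ℕ)), τ.Chain' (edge p) := by
    simp only [Finset.mem_insert, Finset.mem_singleton]
    rintro τ (rfl | rfl) <;> exact List.isChain_singleton _
  rw [muJ, Gam, show lifts N [i] = {[i], [i + N]} by simp [lifts],
    Finset.filter_true_of_mem hchain, Finset.sum_pair hne]
  simp [pword]

-- non-edges have weight `0`, so the indicator of admissibility factorises along the last step
lemma weight_append_singleton (hp0 : ∀ i j, 0 ≤ p i j) {l : List ℕ} (hl : l ≠ []) (b : ℕ) :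
    (if (l ++ [b]).Chain' (edge p) then χ ((l ++ [b]).headD 0) * pword p (l ++ [b]) else 0)
      = (if l.Chain' (edge p) then χ (l.headD 0) * pword p l else 0) * p (l.getLastD 0) b := by
  have hhead : (l ++ [b]).headD 0 = l.headD 0 := by cases l <;> simp_all
  rw [hhead, pword_append_singleton p hl]
  split_ifs with hcb hc hc
  · ring
  · exact absurd ((isChain_append_singleton_iff hl b).mp hcb).1 hc
  · have he : ¬ edge p (l.getLastD 0) b := fun he =>
      hcb ((isChain_append_singleton_iff hl b).mpr ⟨hc, he⟩)
    rw [le_antisymm (not_lt.mp he) (hp0 _ _), mul_zero]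
  · rw [zero_mul]

lemma muJ_append_singleton (hN : 0 < N) (hp0 : ∀ i j, 0 ≤ p i j) {σ : List ℕ} (hσ : σ ≠ [])
    (j : ℕ) :
    muJ p χ N (σ ++ [j]) = ∑ τ ∈ Gam p N σ,
      χ (τ.headD 0) * pword p τ * (p (τ.getLastD 0) j + p (τ.getLastD 0) (j + N)) := by
  have hdisj : (lifts N σ : Set (List ℕ)).PairwiseDisjoint
      fun l => ({l ++ [j], l ++ [j + N]} : Finset (List ℕ)) := by
    intro x hx y hy hxy
    have hlen : x.length = y.length := by
      rw [length_of_mem_lifts hx, length_of_mem_lifts hy]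
    rw [Function.onFun, Finset.disjoint_left]
    intro a ha ha'
    simp only [Finset.mem_insert, Finset.mem_singleton] at ha ha'
    rcases ha with rfl | rfl <;> rcases ha' with h | h <;> exact hxy (List.append_inj h hlen).1
  unfold muJ Gam
  rw [lifts_append_singleton, Finset.sum_filter, Finset.sum_biUnion hdisj, Finset.sum_filter]
  refine Finset.sum_congr rfl fun l hl => ?_
  have hne : l ++ [j] ≠ l ++ [j + N] := by
    simp only [ne_eq, List.append_cancel_left_eq, List.cons.injEq, and_true]; omega
  rw [Finset.sum_pair hne, weight_append_singleton hp0 (ne_nil_of_mem_lifts hσ hl),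
    weight_append_singleton hp0 (ne_nil_of_mem_lifts hσ hl)]
  split_ifs <;> ring

end Measure

section Assumptions

variable {N : ℕ} {p : ℕ → ℕ → ℝ}

def DiagonalEdges (p : ℕ → ℕ → ℝ) (N : ℕ) : Prop :=
  ∀ i ∈ Finset.Icc 1 N, ∀ j ∈ Finset.Icc 1 N, ∀ a b : ℕ,
    (a = i ∨ a = i + N) → (b = j ∨ b = j + N) → 0 < p a b → 0 < p i j ∧ 0 < p (i + N) (j + N)

lemma diagonalEdges_of_zero_or_pos
    (h : ∀ i ∈ Finset.Icc 1 N, ∀ j ∈ Finset.Icc 1 N,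
      (p i j = 0 ∧ p i (j + N) = 0 ∧ p (i + N) j = 0 ∧ p (i + N) (j + N) = 0) ∨
        (0 < p i j ∧ 0 < p (i + N) (j + N))) :
    DiagonalEdges p N := by
  intro i hi j hj a b ha hb hab
  rcases h i hi j hj with ⟨h1, h2, h3, h4⟩ | hpos
  · rcases ha with rfl | rfl <;> rcases hb with rfl | rfl <;> linarith
  · exact hpos

lemma A3.diagonalEdges (h : A3 p N) : DiagonalEdges p N :=
  diagonalEdges_of_zero_or_pos fun i hi j hj => (h i hi j hj).imp_right fun h => ⟨h.1, h.2.2.2⟩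

lemma A4.diagonalEdges (h : A4 p N) : DiagonalEdges p N :=
  diagonalEdges_of_zero_or_pos fun i hi j hj => (h i hi j hj).imp_right fun h => ⟨h.1, h.2.2.2⟩

lemma isSword_pair {i j : ℕ} (hi : i ∈ Finset.Icc 1 N) (hj : j ∈ Finset.Icc 1 N)
    (hij : 0 < p i j) : isSword p N [i, j] := by
  refine ⟨⟨List.cons_ne_nil _ _, fun x hx => ?_⟩, [i, j], Finset.mem_filter.mpr ⟨?_, ?_⟩⟩
  · simp only [List.mem_cons, List.not_mem_nil, or_false] at hx
    rcases hx with rfl | rfl <;> assumption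
  · simp [lifts]
  · exact List.isChain_pair.mpr hij

lemma isSword_append_singleton (hd : DiagonalEdges p N) {t : List ℕ} (ht : t ≠ []) {j : ℕ}
    (h : isSword p N (t ++ [j])) :
    isSword p N t ∧ 0 < p (t.getLastD 0) j ∧ 0 < p (t.getLastD 0 + N) (j + N) := by
  obtain ⟨⟨-, hmem⟩, τ, hτ⟩ := h
  have htΨ : isPsiWord N t := ⟨ht, fun x hx => hmem x (by simp [hx])⟩
  rw [Gam, Finset.mem_filter, lifts_append_singleton] at hτ
  simp only [Finset.mem_biUnion, Finset.mem_insert, Finset.mem_singleton] at hτ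
  obtain ⟨⟨l, hl, hτl⟩, hτc⟩ := hτ
  have hl0 := ne_nil_of_mem_lifts ht hl
  have hlast : l.getLastD 0 = t.getLastD 0 ∨ l.getLastD 0 = t.getLastD 0 + N :=
    getLastD_of_mem_lifts ht hl
  have hi := htΨ.getLastD_mem
  rcases hτl with rfl | rfl <;>
  · obtain ⟨hlc, hedge⟩ := (isChain_append_singleton_iff hl0 _).mp hτc
    exact ⟨⟨htΨ, l, Finset.mem_filter.mpr ⟨hl, hlc⟩⟩,
      hd _ hi j (hmem j (by simp)) _ _ hlast (by omega) hedge⟩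

lemma sword_nonneg (hd : DiagonalEdges p N) {sr : ℕ → ℕ → ℝ}
    (hsr : ∀ i ∈ Finset.Icc 1 N, ∀ j ∈ Finset.Icc 1 N, 0 < p i j → 0 ≤ sr i j)
    (σ : List ℕ) (hσ : isSword p N σ) : 0 ≤ sword sr σ := by
  induction σ using List.reverseRecOn with
  | nil => exact zero_le_one
  | append_singleton t j ih =>
    rcases eq_or_ne t [] with rfl | ht
    · exact zero_le_one
    obtain ⟨ht', hij, -⟩ := isSword_append_singleton hd ht hσ
    rw [sword_eq_pword, pword_append_singleton sr ht, ← sword_eq_pword]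
    exact mul_nonneg (ih ht') (hsr _ ht'.1.getLastD_mem j (hσ.1.2 j (by simp)) hij)

lemma A2.exists_pos_ne (h : A2 p N) {a j : ℕ} (ha : a ∈ Finset.Icc 1 (2 * N))
    (hj : j ∈ Finset.Icc 1 N) :
    ∃ c ∈ Finset.Icc 1 (2 * N), c ≠ j ∧ c ≠ j + N ∧ 0 < p a c := by
  simp only [Finset.mem_Icc] at ha hj
  by_cases haN : a ≤ N
  · obtain ⟨c, hc, hcj⟩ := Finset.exists_mem_ne (h a (by simp; omega)).1 j
    simp only [Finset.mem_filter, Finset.mem_Icc] at hc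
    exact ⟨c, by simp; omega, hcj, by omega, hc.2⟩
  · obtain ⟨c, hc, hcj⟩ := Finset.exists_mem_ne (h (a - N) (by simp; omega)).2 j
    simp only [Finset.mem_filter, Finset.mem_Icc, Nat.sub_add_cancel (by omega : N ≤ a)] at hc
    exact ⟨c + N, by simp; omega, by omega, by omega, hc.2⟩

end Assumptions

section Bounds

variable {N : ℕ} {p : ℕ → ℕ → ℝ} {χ : ℕ → ℝ}

lemma weight_nonneg_of_mem_Gam (hp0 : ∀ i j, 0 ≤ p i j)
    (hχ : ∀ i ∈ Finset.Icc 1 (2 * N), 0 ≤ χ i) {σ τ : List ℕ} (hσ : isPsiWord N σ)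
    (hτ : τ ∈ Gam p N σ) : 0 ≤ χ (τ.headD 0) * pword p τ :=
  mul_nonneg (hχ _ (mem_Icc_of_lift hσ.headD_mem
    (headD_of_mem_lifts hσ.1 (Finset.mem_filter.mp hτ).1))) (pword_nonneg hp0 τ)

lemma p_add_p_le_one_sub (hp0 : ∀ i j, 0 ≤ p i j)
    (hpsum : ∀ i ∈ Finset.Icc 1 (2 * N), ∑ j ∈ Finset.Icc 1 (2 * N), p i j = 1)
    (hA2 : A2 p N) {m : ℝ}
    (hm : ∀ a ∈ Finset.Icc 1 (2 * N), ∀ b ∈ Finset.Icc 1 (2 * N), 0 < p a b → m ≤ p a b)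
    {a j : ℕ} (ha : a ∈ Finset.Icc 1 (2 * N)) (hj : j ∈ Finset.Icc 1 N) :
    p a j + p a (j + N) ≤ 1 - m := by
  obtain ⟨c, hc, hcj, hcjN, hac⟩ := hA2.exists_pos_ne ha hj
  have hsum := add_add_le_one_of_sum_eq_one (fun b _ => hp0 a b) (hpsum a ha)
    (mem_Icc_of_lift hj (Or.inl rfl)) (mem_Icc_of_lift hj (Or.inr rfl)) hc
    (by simp only [Finset.mem_Icc] at hj; omega) (Ne.symm hcj) (Ne.symm hcjN)
  linarith [hm a ha c hc hac]

lemma muJ_append_singleton_bounds (hN : 0 < N) (hp0 : ∀ i j, 0 ≤ p i j)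
    (hpsum : ∀ i ∈ Finset.Icc 1 (2 * N), ∑ j ∈ Finset.Icc 1 (2 * N), p i j = 1)
    (hχ : ∀ i ∈ Finset.Icc 1 (2 * N), 0 ≤ χ i) (hA2 : A2 p N) (hd : DiagonalEdges p N)
    {m : ℝ} (hm : ∀ a ∈ Finset.Icc 1 (2 * N), ∀ b ∈ Finset.Icc 1 (2 * N), 0 < p a b → m ≤ p a b)
    {t : List ℕ} (ht : t ≠ []) {j : ℕ} (h : isSword p N (t ++ [j])) :
    m * muJ p χ N t ≤ muJ p χ N (t ++ [j]) ∧ muJ p χ N (t ++ [j]) ≤ (1 - m) * muJ p χ N t := by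
  obtain ⟨ht', hij, hij'⟩ := isSword_append_singleton hd ht h
  have hi := ht'.1.getLastD_mem
  have hj : j ∈ Finset.Icc 1 N := h.1.2 j (by simp)
  have hbracket : ∀ τ ∈ Gam p N t,
      m ≤ p (τ.getLastD 0) j + p (τ.getLastD 0) (j + N) ∧
        p (τ.getLastD 0) j + p (τ.getLastD 0) (j + N) ≤ 1 - m := by
    intro τ hτ
    have hlast := getLastD_of_mem_lifts ht (Finset.mem_filter.mp hτ).1
    refine ⟨?_, p_add_p_le_one_sub hp0 hpsum hA2 hm (mem_Icc_of_lift hi hlast) hj⟩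
    rcases hlast with hl | hl <;> rw [hl]
    · linarith [hm _ (mem_Icc_of_lift hi (Or.inl rfl)) _ (mem_Icc_of_lift hj (Or.inl rfl)) hij,
        hp0 (t.getLastD 0) (j + N)]
    · linarith [hm _ (mem_Icc_of_lift hi (Or.inr rfl)) _ (mem_Icc_of_lift hj (Or.inr rfl)) hij',
        hp0 (t.getLastD 0 + N) j]
  rw [muJ_append_singleton hN hp0 ht, muJ, Finset.mul_sum, Finset.mul_sum]
  constructor <;> refine Finset.sum_le_sum fun τ hτ => ?_
  · rw [mul_comm m]
    exact mul_le_mul_of_nonneg_left (hbracket τ hτ).1 (weight_nonneg_of_mem_Gam hp0 hχ ht'.1 hτ)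
  · rw [mul_comm (1 - m)]
    exact mul_le_mul_of_nonneg_left (hbracket τ hτ).2 (weight_nonneg_of_mem_Gam hp0 hχ ht'.1 hτ)

lemma Er_of_ne_nil {sr : ℕ → ℕ → ℝ} {r : ℝ} {σ : List ℕ} (hσ : σ ≠ []) :
    Er p χ sr N r σ = muJ p χ N σ * sword sr σ ^ r :=
  if_neg hσ

lemma Er_singleton_bounds (hN : 2 ≤ N) {sr : ℕ → ℕ → ℝ} {r : ℝ}
    (hχ : ∀ i ∈ Finset.Icc 1 (2 * N), 0 ≤ χ i) (hχsum : ∑ i ∈ Finset.Icc 1 (2 * N), χ i = 1)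
    {m : ℝ} (hm : ∀ i ∈ Finset.Icc 1 (2 * N), m ≤ χ i) {j : ℕ} (hj : j ∈ Finset.Icc 1 N) :
    m ≤ Er p χ sr N r [j] ∧ Er p χ sr N r [j] ≤ 1 - m := by
  rw [Er_of_ne_nil (List.cons_ne_nil j []), muJ_singleton (by omega)]
  simp only [sword, Real.one_rpow, mul_one]
  have hjN := mem_Icc_of_lift hj (Or.inr rfl)
  obtain ⟨c, hc⟩ : ∃ c, c ∈ Finset.Icc 1 (2 * N) ∧ j ≠ c ∧ j + N ≠ c := by
    simp only [Finset.mem_Icc] at hj ⊢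
    exact ⟨if j = 1 then 2 else 1, by split_ifs <;> omega⟩
  have hsum := add_add_le_one_of_sum_eq_one hχ hχsum (mem_Icc_of_lift hj (Or.inl rfl)) hjN
    hc.1 (by omega) hc.2.1 hc.2.2
  exact ⟨by linarith [hm j (mem_Icc_of_lift hj (Or.inl rfl)), hχ _ hjN], by linarith [hm c hc.1]⟩

lemma Er_append_singleton_bounds (hN : 0 < N) {sr : ℕ → ℕ → ℝ} {r : ℝ} (hr : 0 < r)
    (hp0 : ∀ i j, 0 ≤ p i j)
    (hpsum : ∀ i ∈ Finset.Icc 1 (2 * N), ∑ j ∈ Finset.Icc 1 (2 * N), p i j = 1)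
    (hχ : ∀ i ∈ Finset.Icc 1 (2 * N), 0 ≤ χ i) (hA2 : A2 p N) (hd : DiagonalEdges p N)
    {m : ℝ} (hm : ∀ a ∈ Finset.Icc 1 (2 * N), ∀ b ∈ Finset.Icc 1 (2 * N), 0 < p a b → m ≤ p a b)
    {ms : ℝ} (hms : 0 ≤ ms)
    (hsr : ∀ i ∈ Finset.Icc 1 N, ∀ j ∈ Finset.Icc 1 N, 0 < p i j → ms ≤ sr i j ∧ sr i j ≤ 1)
    {t : List ℕ} (ht : t ≠ []) {j : ℕ} (h : isSword p N (t ++ [j])) :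
    m * ms ^ r * Er p χ sr N r t ≤ Er p χ sr N r (t ++ [j]) ∧
      Er p χ sr N r (t ++ [j]) ≤ (1 - m) * Er p χ sr N r t := by
  obtain ⟨ht', hij, -⟩ := isSword_append_singleton hd ht h
  obtain ⟨hlow, hup⟩ := muJ_append_singleton_bounds hN hp0 hpsum hχ hA2 hd hm ht h
  obtain ⟨hs_lo, hs_hi⟩ := hsr _ ht'.1.getLastD_mem j (h.1.2 j (by simp)) hij
  have hS : 0 ≤ sword sr t :=
    sword_nonneg hd (fun i hi j hj hp => hms.trans (hsr i hi j hj hp).1) t ht'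
  have hμ : 0 ≤ muJ p χ N t :=
    Finset.sum_nonneg fun τ hτ => weight_nonneg_of_mem_Gam hp0 hχ ht'.1 hτ
  have hμ' : 0 ≤ muJ p χ N (t ++ [j]) :=
    Finset.sum_nonneg fun τ hτ => weight_nonneg_of_mem_Gam hp0 hχ h.1 hτ
  have hE : Er p χ sr N r (t ++ [j]) =
      muJ p χ N (t ++ [j]) * sr (t.getLastD 0) j ^ r * sword sr t ^ r := by
    rw [Er_of_ne_nil (by simp), sword_eq_pword, pword_append_singleton sr ht, ← sword_eq_pword,
      Real.mul_rpow hS (hms.trans hs_lo)]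
    ring
  have hs_r : sr (t.getLastD 0) j ^ r ≤ 1 := Real.rpow_le_one (hms.trans hs_lo) hs_hi hr.le
  rw [hE, Er_of_ne_nil ht]
  constructor
  · calc m * ms ^ r * (muJ p χ N t * sword sr t ^ r)
        = m * muJ p χ N t * ms ^ r * sword sr t ^ r := by ring
      _ ≤ muJ p χ N (t ++ [j]) * sr (t.getLastD 0) j ^ r * sword sr t ^ r := by gcongr
  · calc muJ p χ N (t ++ [j]) * sr (t.getLastD 0) j ^ r * sword sr t ^ r
        ≤ (1 - m) * muJ p χ N t * 1 * sword sr t ^ r :=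
          mul_le_mul_of_nonneg_right (mul_le_mul hup hs_r (Real.rpow_nonneg (hms.trans hs_lo) r)
            (hμ'.trans hup)) (Real.rpow_nonneg hS r)
      _ = (1 - m) * (muJ p χ N t * sword sr t ^ r) := by ring

end Bounds

theorem stmt12_general
    (N q : ℕ) (hN : 2 ≤ N) (r : ℝ) (hr : 0 < r)
    (p : ℕ → ℕ → ℝ) (χ : ℕ → ℝ)
    (hp0 : ∀ i j, 0 ≤ p i j)
    (hpsum : ∀ i ∈ Finset.Icc 1 (2 * N), ∑ j ∈ Finset.Icc 1 (2 * N), p i j = 1)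
    (hχpos : ∀ i ∈ Finset.Icc 1 (2 * N), 0 < χ i)
    (hχsum : ∑ i ∈ Finset.Icc 1 (2 * N), χ i = 1)
    (sr : ℕ → ℕ → ℝ)
    (T : ℕ → ℕ → EuclideanSpace ℝ (Fin q) → EuclideanSpace ℝ (Fin q))
    (hsim : ∀ i ∈ Finset.Icc 1 N, ∀ j ∈ Finset.Icc 1 N, isSword p N [i, j] →
      0 < sr i j ∧ sr i j < 1 ∧ ∀ x y, dist (T i j x) (T i j y) = sr i j * dist x y)
    (hA : (A1 p N ∧ A2 p N ∧ A3 p N) ∨ (A2 p N ∧ A4 p N ∧ A5 p N)) :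
    ∃ c1 ∈ Set.Ioo (0 : ℝ) 1, ∃ c2 ∈ Set.Ioo (0 : ℝ) 1,
      ∀ σ : List ℕ, isSword p N σ →
        c1 * Er p χ sr N r σ.dropLast ≤ Er p χ sr N r σ ∧
          Er p χ sr N r σ ≤ c2 * Er p χ sr N r σ.dropLast := by
  have hd : DiagonalEdges p N := hA.elim (·.2.2.diagonalEdges) (·.2.1.diagonalEdges)
  have hA2 : A2 p N := hA.elim (·.2.1) (·.1)
  have hχ : ∀ i ∈ Finset.Icc 1 (2 * N), 0 ≤ χ i := fun i hi => (hχpos i hi).le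
  have hsr : ∀ i ∈ Finset.Icc 1 N, ∀ j ∈ Finset.Icc 1 N, 0 < p i j → 0 < sr i j ∧ sr i j < 1 :=
    fun i hi j hj h => (hsim i hi j hj (isSword_pair hi hj h)).imp_right And.left
  obtain ⟨mχ, hmχ, hχm⟩ := Finset.exists_mem_Ioo_forall_le _ χ hχpos
  obtain ⟨mp, hmp, hpm⟩ :=
    Finset.exists_mem_Ioo_forall_le₂ (Finset.Icc 1 (2 * N)) _ p fun _ _ _ _ h => h
  obtain ⟨ms, hms, hsm⟩ :=
    Finset.exists_mem_Ioo_forall_le₂ (Finset.Icc 1 N) _ sr fun a ha b hb h => (hsr a ha b hb h).1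
  have hm : min mχ mp ∈ Set.Ioo (0 : ℝ) 1 := ⟨lt_min hmχ.1 hmp.1, (min_le_left _ _).trans_lt hmχ.2⟩
  have hms1 : ms ^ r ≤ 1 := Real.rpow_le_one hms.1.le hms.2.le hr.le
  refine ⟨min mχ mp * ms ^ r, ⟨mul_pos hm.1 (Real.rpow_pos_of_pos hms.1 r),
    (mul_le_of_le_one_right hm.1.le hms1).trans_lt hm.2⟩, 1 - min mχ mp,
    ⟨by linarith [hm.2], by linarith [hm.1]⟩, fun σ hσ => ?_⟩
  obtain ⟨t, j, rfl⟩ := σ.eq_nil_or_concat'.resolve_left hσ.1.1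
  rw [List.dropLast_concat]
  rcases eq_or_ne t [] with rfl | ht
  · obtain ⟨hlo, hhi⟩ := Er_singleton_bounds hN hχ hχsum
      (fun i hi => (min_le_left _ _).trans (hχm i hi)) (hσ.1.2 j (by simp))
    rw [Er, if_pos rfl, mul_one, mul_one]
    exact ⟨(mul_le_of_le_one_right hm.1.le hms1).trans hlo, hhi⟩
  · exact Er_append_singleton_bounds (by omega) hr hp0 hpsum hχ hA2 hd
      (fun a ha b hb h => (min_le_right _ _).trans (hpm a ha b hb h)) hms.1.le
      (fun i hi j hj h => ⟨hsm i hi j hj h, (hsr i hi j hj h).2.le⟩) ht hσ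

/-- **Lemma 3.1.** Assume (A1)–(A3), or (A2), (A4), (A5). There exist constants
`c_{1,r}, c_{2,r} ∈ (0,1)` with `c_{1,r} ℰ_r(σ^♭) ≤ ℰ_r(σ) ≤ c_{2,r} ℰ_r(σ^♭)` for every
`σ ∈ 𝒮^*`. -/
theorem stmt12
    (N q : ℕ) (hN : 2 ≤ N) (hq : 1 ≤ q) (r : ℝ) (hr : 0 < r)
    (p : ℕ → ℕ → ℝ) (χ : ℕ → ℝ)
    (hp0 : ∀ i j, 0 ≤ p i j)
    (hpsupp : ∀ i j, 0 < p i j → i ∈ Finset.Icc 1 (2 * N) ∧ j ∈ Finset.Icc 1 (2 * N))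
    (hpsum : ∀ i ∈ Finset.Icc 1 (2 * N), ∑ j ∈ Finset.Icc 1 (2 * N), p i j = 1)
    (hχpos : ∀ i ∈ Finset.Icc 1 (2 * N), 0 < χ i)
    (hχsum : ∑ i ∈ Finset.Icc 1 (2 * N), χ i = 1)
    (sr : ℕ → ℕ → ℝ)
    (T : ℕ → ℕ → EuclideanSpace ℝ (Fin q) → EuclideanSpace ℝ (Fin q))
    (J : ℕ → Set (EuclideanSpace ℝ (Fin q)))
    (hTinv : ∀ i ∈ Finset.Icc 1 N, ∀ j ∈ Finset.Icc 1 N, ∀ a b : ℕ,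
      (a = i ∨ a = i + N) → (b = j ∨ b = j + N) → 0 < p a b →
      T a b = T i j ∧ sr a b = sr i j)
    (hsim : ∀ i ∈ Finset.Icc 1 N, ∀ j ∈ Finset.Icc 1 N, isSword p N [i, j] →
      0 < sr i j ∧ sr i j < 1 ∧ ∀ x y, dist (T i j x) (T i j y) = sr i j * dist x y)
    (hJcpt : ∀ i ∈ Finset.Icc 1 N,
      IsCompact (J i) ∧ (J i).Nonempty ∧ closure (interior (J i)) = J i ∧
        Metric.diam (J i) = 1)
    (hJdisj : ∀ i ∈ Finset.Icc 1 N, ∀ j ∈ Finset.Icc 1 N, i ≠ j → Disjoint (J i) (J j))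
    (hJplus : ∀ i ∈ Finset.Icc 1 N, J (i + N) = J i)
    (hnest : ∀ i ∈ Finset.Icc 1 N, ∀ j ∈ Finset.Icc 1 N, isSword p N [i, j] →
      T i j '' J j ⊆ J i)
    (hTdisj : ∀ i ∈ Finset.Icc 1 N, ∀ j ∈ Finset.Icc 1 N, ∀ l ∈ Finset.Icc 1 N,
      isSword p N [i, j] → isSword p N [i, l] → j ≠ l →
      Disjoint (T i j '' J j) (T i l '' J l))
    (hA : (A1 p N ∧ A2 p N ∧ A3 p N) ∨ (A2 p N ∧ A4 p N ∧ A5 p N)) :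
    ∃ c1 ∈ Set.Ioo (0 : ℝ) 1, ∃ c2 ∈ Set.Ioo (0 : ℝ) 1,
      ∀ σ : List ℕ, isSword p N σ →
        c1 * Er p χ sr N r σ.dropLast ≤ Er p χ sr N r σ ∧
          Er p χ sr N r σ ≤ c2 * Er p χ sr N r σ.dropLast :=
  stmt12_general N q hN r hr p χ hp0 hpsum hχpos hχsum sr T hsim hA

end MTM

end
end
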